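/- arXiv:1105.2944 — 4 statements merged into one kernel-verified Lean document; each statement's English description precedes it below -/
import Mathlib

section
/- If λ is a regular uncountable cardinal and ⟨C_α : α < λ⁺⟩ is a □_λ-sequence, then for every ordinal θ < λ, the set of indecomposable ordinals γ with θ < γ < λ such that {α < λ⁺ : cf(α) < λ and otp(C_α) = γ} is stationary in λ⁺, is nonempty. Consequently, the set O of such indecomposable γ is cofinal in λ. -/
open Ordinal Set

noncomputable section

/-- The set of accumulation points of `C` that belong to `C`. -/
def acc (C : Set Ordinal) : Set Ordinal :=
  {β | β ∈ C ∧ ∀ γ < β, ∃ δ ∈ C, γ < δ ∧ δ < β}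

/-- Non-accumulation points of `C`. -/
def nacc (C : Set Ordinal) : Set Ordinal := C \ acc C

/-- `X ∩ α` is cofinal in `α`. -/
def CofinalIn (X : Set Ordinal) (α : Ordinal) : Prop :=
  ∀ γ < α, ∃ δ ∈ X, γ < δ ∧ δ < α

/-- Accumulation points of `C` (not necessarily members of `C`). -/
def accPlus (C : Set Ordinal) : Set Ordinal :=
  {β | (∃ δ ∈ C, δ < β) ∧ ∀ γ < β, ∃ δ ∈ C, γ < δ ∧ δ < β}

def IsClosedSet (C : Set Ordinal) : Prop := accPlus C ⊆ C

/-- `C` is a club (closed and unbounded) subset of `α`. -/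
def IsClubIn (C : Set Ordinal) (α : Ordinal) : Prop :=
  C ⊆ Set.Iio α ∧ CofinalIn C α ∧ ∀ β < α, β ∈ accPlus C → β ∈ C

/-- The `i`-th element of the set of ordinals `C` (the inverse collapse of `C`). -/
def nth (C : Set Ordinal) (i : Ordinal) : Ordinal :=
  sInf (C \ Set.range (fun j : Set.Iio i => nth C j.1))
termination_by i
decreasing_by exact j.2

/-- The order type of a set of ordinals: the least `i` such that the first `i`
elements of `C` exhaust `C`. -/
def otp (C : Set Ordinal) : Ordinal :=
  sInf {i | C ⊆ Set.range (fun j : Set.Iio i => nth C j.1)}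

/-- The image of `E` under the order isomorphism (inverse collapse) `π_C : otp(C) → C`. -/
def collapseImage (C E : Set Ordinal) : Set Ordinal :=
  {β | β ∈ C ∧ otp (C ∩ Set.Iio β) ∈ E}

def IsStationaryIn (S : Set Ordinal) (α : Ordinal) : Prop :=
  ∀ D, IsClubIn D α → (S ∩ D).Nonempty

/-- A `□_λ`-sequence. -/
def IsSquareSeq (lam : Cardinal) (C : Ordinal → Set Ordinal) : Prop :=
  ∀ α < (Order.succ lam).ord, Order.IsSuccLimit α →
    IsClubIn (C α) α ∧ otp (C α) ≤ lam.ord ∧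
    ∀ β ∈ acc (C α), C β = C α ∩ Set.Iio β

/-- An Ostaszewski square (`⊠_λ`) sequence. -/
def IsOstSeq (lam : Cardinal) (C : Ordinal → Set Ordinal) : Prop :=
  IsSquareSeq lam C ∧
  ∀ A : Ordinal → Set Ordinal,
    (∀ i < lam.ord, CofinalIn (A i) (Order.succ lam).ord) →
    ∀ θ < lam.ord, Order.IsSuccLimit θ →
    ∀ D, IsClubIn D (Order.succ lam).ord →
    ∃ α < (Order.succ lam).ord, otp (C α) = θ ∧
      ∀ i < θ, nth (C α) (i + 1) ∈ A i ∧
        ∃ β ∈ D, nth (C α) i < β ∧ β < nth (C α) (i + 1)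

/-! If no candidate `γ` gave a stationary set, we could pick for each `γ < λ` a club of `λ⁺`
avoiding it, and the intersection `S` of these `λ` clubs would again be a club. Its `λ`-th point
`A` has cofinality `λ`, so `C_A` has order type exactly `λ`. Alternating ω times between points of
`C_A` and of `S` below `A`, while at least doubling the index into `C_A` at each step, yields an
additively indecomposable `γ ∈ (θ, λ)` whose point `β` in `C_A` is a limit of `S`, hence lies in
`S`. By coherence `C_β = C_A ∩ β` has order type `γ`, and `cf β = cf γ < λ`: a contradiction. -/

open Order
open scoped Cardinal

universe u

section Enumeration

variable {C D : Set Ordinal.{u}} {i j x : Ordinal.{u}}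

def nthBelow (C : Set Ordinal.{u}) (i : Ordinal.{u}) : Set Ordinal.{u} :=
  range (fun j : Iio i => nth C j)

theorem mem_nthBelow : x ∈ nthBelow C i ↔ ∃ j < i, nth C j = x :=
  ⟨fun ⟨⟨j, hj⟩, h⟩ => ⟨j, hj, h⟩, fun ⟨j, hj, h⟩ => ⟨⟨j, hj⟩, h⟩⟩

theorem nth_eq_sInf (C : Set Ordinal.{u}) (i : Ordinal.{u}) :
    nth C i = sInf (C \ nthBelow C i) := by
  rw [nth]; rfl

theorem nthBelow_mono (C : Set Ordinal.{u}) : Monotone (nthBelow C) := fun _ _ h _ hx => by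
  obtain ⟨j, hj, rfl⟩ := mem_nthBelow.1 hx
  exact mem_nthBelow.2 ⟨j, hj.trans_le h, rfl⟩

theorem nth_le_of_mem_diff (hx : x ∈ C \ nthBelow C i) : nth C i ≤ x := by
  rw [nth_eq_sInf]; exact csInf_le' hx

/-- The first `i` elements of `C` do not exhaust `C`; otherwise `nth C i` is the junk value
`sInf ∅ = 0`. -/
def HasNth (C : Set Ordinal.{u}) (i : Ordinal.{u}) : Prop := (C \ nthBelow C i).Nonempty

theorem HasNth.mono (hs : HasNth C j) (h : i ≤ j) : HasNth C i :=
  Set.Nonempty.mono (sdiff_subset_sdiff_right (nthBelow_mono C h)) hs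

theorem HasNth.nth_mem_diff (hs : HasNth C i) : nth C i ∈ C \ nthBelow C i := by
  rw [nth_eq_sInf]; exact csInf_mem hs

theorem HasNth.nth_mem (hs : HasNth C i) : nth C i ∈ C := hs.nth_mem_diff.1

theorem HasNth.nth_lt_nth (hs : HasNth C i) (hj : j < i) : nth C j < nth C i := by
  refine (nth_le_of_mem_diff ⟨hs.nth_mem, fun h => ?_⟩).lt_of_ne fun h' => ?_
  · obtain ⟨k, hk, hke⟩ := mem_nthBelow.1 h
    exact hs.nth_mem_diff.2 (mem_nthBelow.2 ⟨k, hk.trans hj, hke⟩)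
  · exact hs.nth_mem_diff.2 (mem_nthBelow.2 ⟨j, hj, h'⟩)

theorem HasNth.nth_le_nth (hs : HasNth C i) (hj : j ≤ i) : nth C j ≤ nth C i :=
  hj.eq_or_lt.elim (fun h => h ▸ le_rfl) fun h => (hs.nth_lt_nth h).le

theorem HasNth.le_nth (hs : HasNth C i) : i ≤ nth C i := by
  induction i using WellFoundedLT.induction with
  | _ i IH =>
    by_contra! hlt
    exact (IH _ hlt (hs.mono hlt.le)).not_gt (hs.nth_lt_nth hlt)

theorem subset_nthBelow_of_subset_Iio {A : Ordinal.{u}} (hC : C ⊆ Iio A) : C ⊆ nthBelow C A := by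
  by_contra hn
  obtain ⟨c, hc, hcA⟩ := not_subset.1 hn
  have hs : HasNth C A := ⟨c, hc, hcA⟩
  exact hs.le_nth.not_gt (hC hs.nth_mem)

theorem subset_nthBelow_otp {A : Ordinal.{u}} (hC : C ⊆ Iio A) : C ⊆ nthBelow C (otp C) :=
  csInf_mem (s := {i | C ⊆ nthBelow C i}) ⟨A, subset_nthBelow_of_subset_Iio hC⟩

theorem exists_lt_otp_nth_eq {A c : Ordinal.{u}} (hC : C ⊆ Iio A) (hc : c ∈ C) :
    ∃ j : Ordinal.{u}, j < otp C ∧ nth C j = c :=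
  mem_nthBelow.1 (subset_nthBelow_otp hC hc)

theorem hasNth_of_lt_otp (hi : i < otp C) : HasNth C i := by
  by_contra hemp
  refine hi.not_ge (csInf_le' fun c hc => ?_)
  by_contra hn
  exact hemp ⟨c, hc, hn⟩

theorem HasNth.strictMono_nth (hs : HasNth C i) : StrictMono fun j : Iio i => nth C j :=
  fun _ k hjk => (hs.mono k.2.le).nth_lt_nth hjk

theorem nth_eq_of_eq_image {f : Ordinal.{u} → Ordinal.{u}} {o : Ordinal.{u}}
    (hf : StrictMonoOn f (Iio o)) (hD : D = f '' Iio o) : ∀ j < o, nth D j = f j := by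
  intro j
  induction j using WellFoundedLT.induction with
  | _ j IH =>
    intro hj
    have hbelow : nthBelow D j = f '' Iio j := by
      ext x
      simp only [mem_nthBelow, mem_image, mem_Iio]
      exact exists_congr fun k => and_congr_right fun hk => by rw [IH k hk (hk.trans hj)]
    have hfj : f j ∈ D \ nthBelow D j := by
      refine ⟨hD ▸ mem_image_of_mem f hj, ?_⟩
      rw [hbelow]
      rintro ⟨k, hk, hkj⟩
      exact (hf (hk.trans hj) hj hk).ne hkj
    refine le_antisymm (nth_le_of_mem_diff hfj) ?_
    rw [nth_eq_sInf]
    refine le_csInf ⟨_, hfj⟩ ?_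
    rintro _ ⟨hd, hdb⟩
    rw [hD] at hd
    obtain ⟨k, hk, rfl⟩ := hd
    rw [hbelow] at hdb
    exact hf.le_iff_le hj hk |>.2 (not_lt.1 fun hkj => hdb ⟨k, hkj, rfl⟩)

theorem otp_eq_of_eq_image {f : Ordinal.{u} → Ordinal.{u}} {o : Ordinal.{u}}
    (hf : StrictMonoOn f (Iio o)) (hD : D = f '' Iio o) : otp D = o := by
  have hsub : D ⊆ nthBelow D o := by
    rintro _ hd
    rw [hD] at hd
    obtain ⟨k, hk, rfl⟩ := hd
    exact mem_nthBelow.2 ⟨k, hk, nth_eq_of_eq_image hf hD k hk⟩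
  refine le_antisymm (csInf_le' hsub) (not_lt.1 fun hlt => ?_)
  have hmem : f (otp D) ∈ D := (Set.ext_iff.1 hD _).2 ⟨otp D, hlt, rfl⟩
  have hotp : D ⊆ nthBelow D (otp D) := csInf_mem (s := {i | D ⊆ nthBelow D i}) ⟨o, hsub⟩
  obtain ⟨k, hk, hke⟩ := mem_nthBelow.1 (hotp hmem)
  rw [nth_eq_of_eq_image hf hD k (hk.trans hlt)] at hke
  exact (hf (hk.trans hlt) hlt hk).ne hke

theorem HasNth.inter_Iio_nth (hs : HasNth C i) : C ∩ Iio (nth C i) = nth C '' Iio i := by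
  ext c
  refine ⟨fun ⟨hc, hci⟩ => ?_, ?_⟩
  · by_contra hn
    refine (nth_le_of_mem_diff ⟨hc, fun h => hn ?_⟩).not_gt hci
    obtain ⟨j, hj, rfl⟩ := mem_nthBelow.1 h
    exact mem_image_of_mem _ hj
  · rintro ⟨j, hj, rfl⟩
    exact ⟨(hs.mono hj.le).nth_mem, hs.nth_lt_nth hj⟩

theorem HasNth.otp_inter_Iio_nth (hs : HasNth C i) : otp (C ∩ Iio (nth C i)) = i :=
  otp_eq_of_eq_image (fun _ _ _ hk hjk => (hs.mono hk.le).nth_lt_nth hjk) hs.inter_Iio_nth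

end Enumeration

theorem iSup_Iio_lt_of_card_lt_cof {o a : Ordinal.{u}} {f : Ordinal.{u} → Ordinal.{u}}
    (ho : o.card < a.cof) (hf : ∀ j < o, f j < a) : ⨆ j : Iio o, f j < a :=
  Ordinal.lift_iSup_lt_of_lt_cof (by simpa [← Ordinal.lift_cof, ← Ordinal.lift_card] using ho)
    fun j => hf j j.2

theorem ord_cof_le_otp {K : Set Ordinal.{u}} {A : Ordinal.{u}} (hK : K ⊆ Iio A)
    (hcof : CofinalIn K A) : A.cof.ord ≤ otp K := by
  by_contra! h
  have hsup : ⨆ j : Iio (otp K), nth K j < A :=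
    iSup_Iio_lt_of_card_lt_cof (Cardinal.lt_ord.1 h) fun j hj => hK (hasNth_of_lt_otp hj).nth_mem
  obtain ⟨δ, hδ, hδs, -⟩ := hcof _ hsup
  obtain ⟨j, hj, rfl⟩ := exists_lt_otp_nth_eq hK hδ
  exact hδs.not_ge (Ordinal.le_iSup (fun k : Iio (otp K) => nth K k) ⟨j, hj⟩)

namespace IsClubIn

variable {C : Set Ordinal.{u}} {α i s : Ordinal.{u}}

theorem mem_of_cofinalIn (hC : IsClubIn C α) (hs : s < α) (hs0 : 0 < s)
    (hcof : CofinalIn C s) : s ∈ C :=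
  hC.2.2 s hs ⟨let ⟨δ, hδ, _, hδs⟩ := hcof 0 hs0; ⟨δ, hδ, hδs⟩, hcof⟩

theorem nth_eq_iSup (hC : IsClubIn C α) (hi : IsSuccLimit i) (hs : HasNth C i) :
    nth C i = ⨆ j : Iio i, nth C j := by
  set s := ⨆ j : Iio i, nth C j
  have hlt : ∀ j < i, nth C j < s := fun j hj =>
    ((hs.mono (hi.succ_lt hj).le).nth_lt_nth (lt_succ j)).trans_le
      (Ordinal.le_iSup (fun k : Iio i => nth C k) ⟨succ j, hi.succ_lt hj⟩)
  refine le_antisymm (not_lt.1 fun hsi => ?_) (Ordinal.iSup_le fun j => (hs.nth_lt_nth j.2).le)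
  have hsC : s ∈ C := by
    refine hC.mem_of_cofinalIn (hsi.trans (hC.1 hs.nth_mem)) ((hlt 0 hi.pos).trans_le' bot_le)
      fun c hc => ?_
    obtain ⟨j, hc⟩ := Ordinal.lt_iSup_iff.1 hc
    exact ⟨nth C j, (hs.mono j.2.le).nth_mem, hc, hlt j j.2⟩
  refine (nth_le_of_mem_diff ⟨hsC, fun h => ?_⟩).not_gt hsi
  obtain ⟨k, hk, hks⟩ := mem_nthBelow.1 h
  exact (hlt k hk).ne hks

theorem exists_lt_nth (hC : IsClubIn C α) (hi : IsSuccLimit i) (hs : HasNth C i) {c : Ordinal.{u}}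
    (hc : c < nth C i) : ∃ j < i, c < nth C j := by
  rw [hC.nth_eq_iSup hi hs, Ordinal.lt_iSup_iff] at hc
  obtain ⟨⟨j, hj⟩, hcj⟩ := hc
  exact ⟨j, hj, hcj⟩

theorem nth_mem_acc (hC : IsClubIn C α) (hi : IsSuccLimit i) (hs : HasNth C i) :
    nth C i ∈ acc C := by
  refine ⟨hs.nth_mem, fun c hc => ?_⟩
  obtain ⟨j, hj, hcj⟩ := hC.exists_lt_nth hi hs hc
  exact ⟨nth C j, (hs.mono hj.le).nth_mem, hcj, hs.nth_lt_nth hj⟩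

theorem isSuccLimit_nth (hC : IsClubIn C α) (hi : IsSuccLimit i) (hs : HasNth C i) :
    IsSuccLimit (nth C i) := by
  rw [Ordinal.isSuccLimit_iff, isSuccPrelimit_iff_succ_lt]
  refine ⟨(hs.nth_lt_nth hi.pos).ne_bot, fun c hc => ?_⟩
  obtain ⟨j, hj, hcj⟩ := hC.exists_lt_nth hi hs hc
  exact (succ_le_of_lt hcj).trans_lt (hs.nth_lt_nth hj)

theorem cof_nth (hC : IsClubIn C α) (hi : IsSuccLimit i) (hs : HasNth C i) :
    (nth C i).cof = i.cof := by
  rw [hC.nth_eq_iSup hi hs, Ordinal.cof_iSup_Iio hs.strictMono_nth hi.isSuccPrelimit]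

end IsClubIn

section Clubs

variable {κ : Cardinal.{u}}

theorem accPlus_mono {C D : Set Ordinal.{u}} (h : C ⊆ D) : accPlus C ⊆ accPlus D :=
  fun _ ⟨⟨δ, hδ, hδβ⟩, hcof⟩ => ⟨⟨δ, h hδ, hδβ⟩, fun c hc =>
    let ⟨δ, hδ, hcδ, hδβ⟩ := hcof c hc; ⟨δ, h hδ, hcδ, hδβ⟩⟩

theorem isClubIn_Iio {α : Ordinal.{u}} (hα : IsSuccLimit α) : IsClubIn (Iio α) α :=
  ⟨subset_rfl, fun ξ hξ => ⟨succ ξ, hα.succ_lt hξ, lt_succ ξ, hα.succ_lt hξ⟩, fun _ hβ _ => hβ⟩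

theorem isClubIn_setOf_forall_mem (hκ : κ.IsRegular) (hκ0 : ℵ₀ < κ) {o : Ordinal.{u}}
    (ho : o.card < κ) {E : Ordinal.{u} → Set Ordinal.{u}} (hE : ∀ γ < o, IsClubIn (E γ) κ.ord) :
    IsClubIn {β | β < κ.ord ∧ ∀ γ < o, β ∈ E γ} κ.ord := by
  refine ⟨fun β hβ => hβ.1, fun ξ hξ => ?_, fun β hβ hacc => ⟨hβ, fun γ hγ =>
    (hE γ hγ).2.2 β hβ (accPlus_mono (fun δ hδ => hδ.2 γ hγ) hacc)⟩⟩
  have hlim : IsSuccLimit κ.ord := Cardinal.isSuccLimit_ord hκ0.le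
  set next : Ordinal.{u} → Ordinal.{u} → Ordinal.{u} := fun γ x => sInf (E γ ∩ Ioi x)
  have hnext : ∀ γ < o, ∀ x < κ.ord, next γ x ∈ E γ ∩ Ioi x := fun γ hγ x hx =>
    let ⟨δ, hδ, hxδ, _⟩ := (hE γ hγ).2.1 x hx
    csInf_mem ⟨δ, hδ, hxδ⟩
  -- Every `E γ` meets each interval `(x, g x)`, so the `ω`-th iterate of `g` lies in all of them.
  set g : Ordinal.{u} → Ordinal.{u} := fun x => succ (⨆ γ : Iio o, next γ x)
  have hg : ∀ x < κ.ord, g x < κ.ord := fun x hx => hlim.succ_lt <|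
    iSup_Iio_lt_of_card_lt_cof (by rwa [hκ.cof_ord]) fun γ hγ => (hE γ hγ).1 (hnext γ hγ x hx).1
  have hnext_lt : ∀ γ < o, ∀ x, next γ x < g x := fun γ hγ x =>
    lt_succ_of_le (Ordinal.le_iSup (fun γ : Iio o => next γ x) ⟨γ, hγ⟩)
  set s := nfp g (succ ξ)
  have hs : s < κ.ord := Cardinal.nfp_lt_ord_of_isRegular hκ hκ0.ne' hg (hlim.succ_lt hξ)
  have hξs : ξ < s := (lt_succ ξ).trans_le (le_nfp g _)
  refine ⟨s, ⟨hs, fun γ hγ => ?_⟩, hξs, hs⟩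
  refine (hE γ hγ).mem_of_cofinalIn hs (hξs.trans_le' bot_le) fun c hc => ?_
  obtain ⟨n, hn⟩ := lt_nfp_iff.1 hc
  have hx := hnext γ hγ _ ((iterate_le_nfp g _ n).trans_lt hs)
  refine ⟨_, hx.1, hn.trans hx.2, (hnext_lt γ hγ _).trans_le ?_⟩
  simpa only [Function.iterate_succ_apply'] using iterate_le_nfp g (succ ξ) (n + 1)

theorem exists_isStationaryIn_of_forall_isClubIn (hκ : κ.IsRegular) (hκ0 : ℵ₀ < κ)
    {o : Ordinal.{u}} (ho : o.card < κ) (Q : Ordinal.{u} → Prop) (P : Ordinal.{u} → Set Ordinal.{u})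
    (h : ∀ D, IsClubIn D κ.ord → ∃ γ < o, Q γ ∧ (P γ ∩ D).Nonempty) :
    ∃ γ < o, Q γ ∧ IsStationaryIn (P γ) κ.ord := by
  by_contra! hns
  have hE : ∀ γ, ∃ E, IsClubIn E κ.ord ∧ (γ < o → Q γ → P γ ∩ E = ∅) := by
    intro γ
    by_cases hγ : γ < o ∧ Q γ
    · obtain ⟨E, hE, hPE⟩ : ∃ E, IsClubIn E κ.ord ∧ ¬(P γ ∩ E).Nonempty := by
        simpa [IsStationaryIn] using hns γ hγ.1 hγ.2
      exact ⟨E, hE, fun _ _ => not_nonempty_iff_eq_empty.1 hPE⟩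
    · exact ⟨Iio κ.ord, isClubIn_Iio (Cardinal.isSuccLimit_ord hκ0.le),
        fun h1 h2 => (hγ ⟨h1, h2⟩).elim⟩
  choose E hEclub hPE using hE
  obtain ⟨γ, hγ, hQ, β, hβP, hβ⟩ := h _ (isClubIn_setOf_forall_mem hκ hκ0 ho fun γ _ => hEclub γ)
  exact (eq_empty_iff_forall_notMem.1 (hPE γ hγ hQ)) β ⟨hβP, hβ.2 γ hγ⟩

end Clubs

theorem isPrincipal_add_nfp {g : Ordinal.{u} → Ordinal.{u}} (hg : ∀ x, x + x < g x)
    (a : Ordinal.{u}) : IsPrincipal (· + ·) (nfp g a) := by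
  have hmono : Monotone fun n => g^[n] a := monotone_nat_of_le_succ fun n => by
    rw [Function.iterate_succ_apply']
    exact (le_self_add).trans (hg _).le
  intro b c hb hc
  obtain ⟨m, hm⟩ := lt_nfp_iff.1 hb
  obtain ⟨n, hn⟩ := lt_nfp_iff.1 hc
  calc b + c < g^[max m n] a + g^[max m n] a :=
        (add_le_add_left (hm.trans_le (hmono (le_max_left m n))).le c).trans_lt
          (add_lt_add_right (hn.trans_le (hmono (le_max_right m n))) _)
    _ < g (g^[max m n] a) := hg _
    _ ≤ nfp g a := by
      simpa only [Function.iterate_succ_apply'] using iterate_le_nfp g a (max m n + 1)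

theorem exists_isPrincipal_add_cofinalIn_nth {κ : Cardinal.{u}} (hκ : κ.IsRegular)
    (hκ0 : ℵ₀ < κ) {K S : Set Ordinal.{u}} {A θ : Ordinal.{u}} (hK : IsClubIn K A)
    (hotp : otp K = κ.ord) (hS : CofinalIn S A) (hθ : θ < κ.ord) :
    ∃ γ, IsPrincipal (· + ·) γ ∧ θ < γ ∧ γ < κ.ord ∧ IsSuccLimit γ ∧ CofinalIn S (nth K γ) := by
  have hlim : IsSuccLimit κ.ord := Cardinal.isSuccLimit_ord hκ0.le
  have hs : ∀ {i}, i < κ.ord → HasNth K i := fun hi => hasNth_of_lt_otp (hotp ▸ hi)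
  -- Doubling the index at each step makes the limit of the indices additively indecomposable.
  have hstep : ∀ i, ∃ i', i + i < i' ∧
      (i < κ.ord → i' < κ.ord ∧ ∃ e ∈ S, nth K i < e ∧ e < nth K i') := by
    intro i
    by_cases hi : i < κ.ord
    · obtain ⟨e, he, hie, heA⟩ := hS _ (hK.1 (hs hi).nth_mem)
      obtain ⟨δ, hδ, heδ, -⟩ := hK.2.1 e heA
      obtain ⟨i₁, hi₁, rfl⟩ := exists_lt_otp_nth_eq hK.1 hδ
      rw [hotp] at hi₁
      have hi' : max i₁ (succ (i + i)) < κ.ord :=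
        max_lt hi₁ (hlim.succ_lt (Ordinal.isPrincipal_add_ord hκ0.le hi hi))
      exact ⟨_, (lt_succ _).trans_le (le_max_right _ _), fun _ =>
        ⟨hi', e, he, hie, heδ.trans_le ((hs hi').nth_le_nth (le_max_left _ _))⟩⟩
    · exact ⟨succ (i + i), lt_succ _, fun h => (hi h).elim⟩
  choose g hg hgS using hstep
  set γ := nfp g (succ θ)
  have hiter : ∀ n, g (g^[n] (succ θ)) ≤ γ := fun n => by
    simpa only [Function.iterate_succ_apply'] using iterate_le_nfp g (succ θ) (n + 1)
  have hγ : γ < κ.ord :=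
    Cardinal.nfp_lt_ord_of_isRegular hκ hκ0.ne' (fun i hi => (hgS i hi).1) (hlim.succ_lt hθ)
  have hprin : IsPrincipal (· + ·) γ := isPrincipal_add_nfp hg (succ θ)
  have hγlim : IsSuccLimit γ := by
    refine isSuccLimit_of_isPrincipal_add ?_ hprin
    calc (1 : Ordinal) ≤ succ θ := by simp
      _ ≤ succ θ + succ θ := le_self_add
      _ < γ := (hg _).trans_le (hiter 0)
  refine ⟨γ, hprin, (lt_succ θ).trans_le (le_nfp g _), hγ, hγlim, fun c hc => ?_⟩
  obtain ⟨j, hj, hcj⟩ := hK.exists_lt_nth hγlim (hs hγ) hc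
  obtain ⟨n, hn⟩ := lt_nfp_iff.1 hj
  have hx : g^[n] (succ θ) < κ.ord := (iterate_le_nfp g _ n).trans_lt hγ
  obtain ⟨-, e, he, hxe, hex⟩ := hgS _ hx
  exact ⟨e, he, hcj.trans (((hs hx).nth_le_nth hn.le).trans_lt hxe),
    hex.trans_le ((hs hγ).nth_le_nth (hiter n))⟩

theorem IsSquareSeq.exists_mem_inter {lam : Cardinal.{u}} {C : Ordinal.{u} → Set Ordinal.{u}}
    (hC : IsSquareSeq lam C) (hreg : lam.IsRegular) (hunc : ℵ₀ < lam) {S : Set Ordinal.{u}}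
    (hS : IsClubIn S (succ lam).ord) {θ : Ordinal.{u}} (hθ : θ < lam.ord) :
    ∃ γ < lam.ord, (IsPrincipal (· + ·) γ ∧ θ < γ) ∧
      ({α | α < (succ lam).ord ∧ α.cof < lam ∧ otp (C α) = γ} ∩ S).Nonempty := by
  have hlim : IsSuccLimit lam.ord := Cardinal.isSuccLimit_ord hunc.le
  have hsucc : (succ lam).IsRegular := Cardinal.isRegular_succ hunc.le
  have hSotp : lam.ord < otp S := (Cardinal.ord_lt_ord.2 (lt_succ lam)).trans_le
    (by simpa [hsucc.cof_ord] using ord_cof_le_otp hS.1 hS.2.1)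
  have hsA : HasNth S lam.ord := hasNth_of_lt_otp hSotp
  set A := nth S lam.ord
  have hAT : A < (succ lam).ord := hS.1 hsA.nth_mem
  obtain ⟨hK, hKotp, hKcoh⟩ := hC A hAT (hS.isSuccLimit_nth hlim hsA)
  have hcofA : A.cof = lam := (hS.cof_nth hlim hsA).trans hreg.cof_ord
  have hotp : otp (C A) = lam.ord := hKotp.antisymm (hcofA ▸ ord_cof_le_otp hK.1 hK.2.1)
  obtain ⟨γ, hprin, hθγ, hγ, hγlim, hSβ⟩ :=
    exists_isPrincipal_add_cofinalIn_nth hreg hunc hK hotp (hS.nth_mem_acc hlim hsA).2 hθ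
  have hsβ : HasNth (C A) γ := hasNth_of_lt_otp (hotp ▸ hγ)
  set β := nth (C A) γ
  have hβT : β < (succ lam).ord := (hK.1 hsβ.nth_mem).trans hAT
  refine ⟨γ, hγ, ⟨hprin, hθγ⟩, β, ⟨hβT, ?_, ?_⟩,
    hS.mem_of_cofinalIn hβT (hK.isSuccLimit_nth hγlim hsβ).pos hSβ⟩
  · rw [hK.cof_nth hγlim hsβ]
    exact (Ordinal.cof_le_card γ).trans_lt (Cardinal.lt_ord.1 hγ)
  · rw [hKcoh β (hK.nth_mem_acc hγlim hsβ)]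
    exact hsβ.otp_inter_Iio_nth

theorem stmt0 (lam : Cardinal) (hreg : lam.IsRegular) (hunc : Cardinal.aleph0 < lam)
    (C : Ordinal → Set Ordinal) (hC : IsSquareSeq lam C) :
    ∀ θ < lam.ord, ∃ γ : Ordinal,
      (∀ a < γ, ∀ b < γ, a + b < γ) ∧ θ < γ ∧ γ < lam.ord ∧
      IsStationaryIn
        {α | α < (Order.succ lam).ord ∧ α.cof < lam ∧ otp (C α) = γ}
        (Order.succ lam).ord := by
  intro θ hθ
  obtain ⟨γ, hγ, ⟨hprin, hθγ⟩, hstat⟩ := exists_isStationaryIn_of_forall_isClubIn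
    (Cardinal.isRegular_succ hunc.le) (hunc.trans (lt_succ lam)) (o := lam.ord)
    (by simp) _ _ fun S hS => hC.exists_mem_inter hreg hunc hS hθ
  exact ⟨γ, fun a ha b hb => hprin ha hb, hθγ, hγ, hstat⟩

end
end

section
/- Let λ be a singular cardinal and suppose ⟨C_α : α < λ⁺⟩ is a ⊠_λ-sequence (Ostaszewski square). Then 2^λ = λ⁺. Specifically, fixing a partition {H_i : i < λ} of λ⁺ into λ mutually disjoint sets each of size λ⁺, and setting X_α := {i < λ : H_i ∩ nacc(C_β) ≠ ∅ for some β ∈ nacc(C_α)} for α < λ⁺, one has P(λ) = {X_α : α < λ⁺} after identifying subsets of λ appropriately; in particular there are at most λ⁺ subsets of λ. -/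
open Ordinal Set

noncomputable section

/-!
Split `λ⁺` into the `λ` residue classes modulo `λ`, each cofinal in `λ⁺`. Guessing one class per
coordinate shows that every bounded `x ⊆ λ` is read off the successor points of some `C_β`; since
the guessing club can be taken above any bound on the points `C_β(1)` of earlier codes, this
happens for cofinally many `β < λ⁺`. As `λ` is singular, every `X ⊆ λ` is the union of
`cf λ < λ` bounded pieces `X ∩ g(i)`. Guessing once more, now with the cofinal sets of codes of
these pieces, gives one `α < λ⁺` whose successor points code all the pieces, so `λ⁺` maps onto
`𝒫(λ)` and `2^λ ≤ λ⁺`.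
-/

universe u

namespace OstaszewskiSquare

open Order Cardinal

variable {lam : Cardinal.{u}}

theorem exists_bound_of_lt_ord_succ (hlam : ℵ₀ ≤ lam) {γ : Ordinal.{u}}
    (hγ : γ < (succ lam).ord) {F : Ordinal.{u} → Ordinal.{u}}
    (hF : ∀ β < γ, F β < (succ lam).ord) :
    ∃ s < (succ lam).ord, ∀ β < γ, F β ≤ s := by
  refine ⟨⨆ β : Iio γ, F β, Ordinal.lift_iSup_lt_of_lt_cof ?_ fun β => hF β β.2,
    fun β hβ => Ordinal.le_iSup (fun β : Iio γ => F β) ⟨β, hβ⟩⟩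
  rw [Cardinal.mk_Iio_ordinal, ← Ordinal.lift_cof, (isRegular_succ hlam).cof_ord,
    Cardinal.lift_lift, Cardinal.lift_lt]
  exact lt_ord.1 hγ

theorem exists_cofinal_seq_of_isSuccLimit {o : Ordinal.{u}} (ho : IsSuccLimit o) :
    ∃ g : Ordinal.{u} → Ordinal.{u}, (∀ i, g i < o) ∧ ∀ j < o, ∃ i < o.cof.ord, j < g i := by
  obtain ⟨f, hf⟩ := Ordinal.exists_isFundamentalSeq (o := o) rfl
  refine ⟨fun i => if h : i < o.cof.ord then f ⟨i, h⟩ else 0, fun i => ?_, fun j hj => ?_⟩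
  · dsimp only
    split_ifs
    exacts [(f _).2, ho.bot_lt]
  · obtain ⟨_, ⟨i, rfl⟩, hi⟩ := hf.isCofinal_range ⟨j + 1, ho.add_one_lt hj⟩
    refine ⟨i, i.2, ?_⟩
    dsimp only
    rw [dif_pos (mem_Iio.1 i.2)]
    exact add_one_le_iff.1 (Subtype.mk_le_mk.1 hi)

theorem isClubIn_Ioo {o γ : Ordinal.{u}} (ho : IsSuccLimit o) (hγ : γ < o) :
    IsClubIn (Ioo γ o) o := by
  refine ⟨fun d hd => hd.2, fun δ hδ => ?_, ?_⟩
  · have hm : max γ δ + 1 < o := ho.add_one_lt (max_lt hγ hδ)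
    exact ⟨max γ δ + 1, ⟨(le_max_left _ _).trans_lt (lt_add_one _), hm⟩,
      (le_max_right _ _).trans_lt (lt_add_one _), hm⟩
  · rintro β hβ ⟨⟨d, hd, hdβ⟩, -⟩
    exact ⟨hd.1.trans hdβ, hβ⟩

theorem two_power_le_succ_of_surjOn {F : Ordinal.{u} → Set Ordinal.{u}}
    (hF : SurjOn F (Iio (succ lam).ord) (𝒫 Iio lam.ord)) : 2 ^ lam ≤ succ lam := by
  have hle := (mk_le_mk_of_subset hF).trans mk_image_le
  rwa [mk_powerset, Cardinal.mk_Iio_ordinal, Cardinal.mk_Iio_ordinal, card_ord, card_ord,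
    ← lift_two_power, Cardinal.lift_le] at hle

def residueClass (lam : Cardinal.{u}) (r : Ordinal.{u}) : Set Ordinal.{u} :=
  {d | d < (succ lam).ord ∧ d % lam.ord = r}

theorem cofinalIn_residueClass (hlam : ℵ₀ ≤ lam) {r : Ordinal.{u}} (hr : r < lam.ord) :
    CofinalIn (residueClass lam r) (succ lam).ord := by
  intro γ hγ
  have hlam0 : lam.ord ≠ 0 := (isSuccLimit_ord hlam).ne_bot
  have hsucc : ℵ₀ ≤ succ lam := hlam.trans (le_succ lam)
  have hlt : lam.ord * (γ / lam.ord + 1) + r < (succ lam).ord := by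
    have hq : γ / lam.ord + 1 < (succ lam).ord :=
      (isSuccLimit_ord hsucc).add_one_lt (((Ordinal.le_mul_right _ (pos_iff_ne_zero.2 hlam0)).trans
        (Ordinal.mul_div_le γ lam.ord)).trans_lt hγ)
    have hlam' : lam.ord < (succ lam).ord := ord_lt_ord.2 (lt_succ lam)
    exact isPrincipal_add_ord hsucc (isPrincipal_mul_ord hsucc hlam' hq) (hr.trans hlam')
  refine ⟨_, ⟨hlt, ?_⟩, ?_, hlt⟩
  · rw [Ordinal.mul_add_mod_self, Ordinal.mod_eq_of_lt hr]
  · calc γ < lam.ord * (γ / lam.ord) + lam.ord := Ordinal.lt_mul_div_add γ hlam0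
      _ = lam.ord * (γ / lam.ord + 1) := (mul_add_one _ _).symm
      _ ≤ _ := le_self_add

/-- The shift to `j + 1` leaves the residue class `0` for the points that code nothing. -/
def codedSet (lam : Cardinal.{u}) (C : Ordinal.{u} → Set Ordinal.{u}) (β : Ordinal.{u}) :
    Set Ordinal.{u} :=
  {j | ∃ i : Ordinal.{u}, i < otp (C β) ∧ nth (C β) (i + 1) % lam.ord = j + 1}

def codedSet₂ (lam : Cardinal.{u}) (C : Ordinal.{u} → Set Ordinal.{u}) (α : Ordinal.{u}) :
    Set Ordinal.{u} :=
  {j | ∃ i : Ordinal.{u}, i < otp (C α) ∧ j ∈ codedSet lam C (nth (C α) (i + 1))}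

end OstaszewskiSquare

namespace IsOstSeq

open Order Cardinal OstaszewskiSquare

variable {lam : Cardinal.{u}} {C : Ordinal.{u} → Set Ordinal.{u}}

/-- The club `D` serves to push `C_β(1)` above any given bound, see `cofinalIn_codedSet_eq`. -/
theorem exists_codedSet_eq (hC : IsOstSeq lam C) (hlam : ℵ₀ < lam) {x : Set Ordinal.{u}}
    {δ : Ordinal.{u}} (hδ : δ < lam.ord) (hx : x ⊆ Iio δ) {D : Set Ordinal.{u}}
    (hD : IsClubIn D (succ lam).ord) :
    ∃ β < (succ lam).ord, codedSet lam C β = x ∧ nth (C β) (1 : Ordinal.{u}) < (succ lam).ord ∧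
      ∃ d ∈ D, d < nth (C β) (1 : Ordinal.{u}) := by
  classical
  have hlam' : ℵ₀ ≤ lam := hlam.le
  have hθ : δ + ω < lam.ord :=
    isPrincipal_add_ord hlam' hδ (by rw [← ord_aleph0]; exact ord_lt_ord.2 hlam)
  have hθlim : IsSuccLimit (δ + ω) := Ordinal.isSuccLimit_add δ Ordinal.isSuccLimit_omega0
  let r : Ordinal.{u} → Ordinal.{u} := fun i => if i ∈ x then i + 1 else 0
  have hr : ∀ i < lam.ord, r i < lam.ord := by
    intro i hi
    dsimp only [r]
    split_ifs
    exacts [(isSuccLimit_ord hlam').add_one_lt hi, (isSuccLimit_ord hlam').bot_lt]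
  obtain ⟨β, hβ, hotp, hguess⟩ := hC.2 (fun i => residueClass lam (r i))
    (fun i hi => cofinalIn_residueClass hlam' (hr i hi)) _ hθ hθlim D hD
  have hres : ∀ i < δ + ω, nth (C β) (i + 1) % lam.ord = r i := fun i hi => (hguess i hi).1.2
  obtain ⟨⟨hβ1, -⟩, d, hdD, -, hd⟩ := hguess 0 hθlim.bot_lt
  rw [zero_add] at hβ1 hd
  refine ⟨β, hβ, ?_, hβ1, d, hdD, hd⟩
  ext j
  constructor
  · rintro ⟨i, hi, hij⟩
    rw [hotp] at hi
    rw [hres i hi] at hij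
    dsimp only [r] at hij
    split_ifs at hij with hix
    · rwa [← show i = j by simpa using hij]
    · exact absurd hij.symm (by simp)
  · intro hj
    have hjθ : j < δ + ω := (hx hj).trans_le le_self_add
    exact ⟨j, hotp ▸ hjθ, by rw [hres j hjθ]; simp [r, hj]⟩

theorem cofinalIn_codedSet_eq (hC : IsOstSeq lam C) (hlam : ℵ₀ < lam) {x : Set Ordinal.{u}}
    {δ : Ordinal.{u}} (hδ : δ < lam.ord) (hx : x ⊆ Iio δ) :
    CofinalIn {β | β < (succ lam).ord ∧ codedSet lam C β = x} (succ lam).ord := by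
  classical
  intro γ hγ
  by_contra! hbdd
  -- all codes of `x` are `≤ γ`, so their points `C_β(1)` are bounded by some `s < λ⁺`,
  -- while guessing with the club `(s, λ⁺)` produces a code whose `C_β(1)` exceeds `s`
  have hlim : IsSuccLimit (succ lam).ord := isSuccLimit_ord (hlam.le.trans (le_succ lam))
  let F : Ordinal.{u} → Ordinal.{u} := fun β =>
    if codedSet lam C β = x ∧ nth (C β) (1 : Ordinal.{u}) < (succ lam).ord
    then nth (C β) (1 : Ordinal.{u}) else 0
  obtain ⟨s, hs, hFs⟩ := exists_bound_of_lt_ord_succ hlam.le (hlim.add_one_lt hγ)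
    (F := F) fun β _ => by dsimp only [F]; split_ifs with h; exacts [h.2, hlim.bot_lt]
  obtain ⟨β, hβ, hcode, hβ1, d, hd, hdβ⟩ :=
    hC.exists_codedSet_eq hlam hδ hx (isClubIn_Ioo hlim hs)
  have hβγ : β < γ + 1 := lt_add_one_iff.2 (not_lt.1 fun h => (hbdd β ⟨hβ, hcode⟩ h).not_gt hβ)
  have hFβ : F β = nth (C β) (1 : Ordinal.{u}) := if_pos ⟨hcode, hβ1⟩
  exact (hFβ ▸ hFs β hβγ).not_gt (hd.1.trans hdβ)

theorem surjOn_codedSet₂ (hC : IsOstSeq lam C) (hlam : ℵ₀ < lam) (hcof : lam.ord.cof < lam) :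
    SurjOn (codedSet₂ lam C) (Iio (succ lam).ord) (𝒫 Iio lam.ord) := by
  intro X hX
  have hlim : IsSuccLimit (succ lam).ord := isSuccLimit_ord (hlam.le.trans (le_succ lam))
  have hlamlim : IsSuccLimit lam.ord := isSuccLimit_ord hlam.le
  obtain ⟨g, hg, hcover⟩ := exists_cofinal_seq_of_isSuccLimit hlamlim
  obtain ⟨α, hα, hotp, hguess⟩ :=
    hC.2 (fun i => {β | β < (succ lam).ord ∧ codedSet lam C β = X ∩ Iio (g i)})
      (fun i _ => hC.cofinalIn_codedSet_eq hlam (hg i) inter_subset_right)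
      _ (ord_lt_ord.2 hcof) (isSuccLimit_ord (aleph0_le_cof_iff.2 (one_lt_cof_iff.2 hlamlim)))
      _ (isClubIn_Ioo hlim hlim.bot_lt)
  refine ⟨α, hα, Set.ext fun j => ⟨?_, fun hj => ?_⟩⟩
  · rintro ⟨i, hi, hj⟩
    rw [(hguess i (hotp ▸ hi)).1.2] at hj
    exact hj.1
  · obtain ⟨i, hi, hji⟩ := hcover j (hX hj)
    exact ⟨i, hotp ▸ hi, by rw [(hguess i hi).1.2]; exact ⟨hj, hji⟩⟩

end IsOstSeq

theorem stmt7 (lam : Cardinal) (hinf : Cardinal.aleph0 ≤ lam) (hsing : ¬lam.IsRegular)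
    (C : Ordinal → Set Ordinal) (hC : IsOstSeq lam C) :
    (2 : Cardinal) ^ lam = Order.succ lam := by
  have hlam : Cardinal.aleph0 < lam :=
    hinf.lt_of_ne fun h => hsing (h ▸ Cardinal.isRegular_aleph0)
  have hcof : lam.ord.cof < lam := not_le.1 fun h => hsing ⟨hinf, h⟩
  exact le_antisymm
    (OstaszewskiSquare.two_power_le_succ_of_surjOn (hC.surjOn_codedSet₂ hlam hcof))
    (Order.succ_le_of_lt (Cardinal.cantor lam))

end
end

section
/- Let λ be an infinite cardinal and let T be the tree constructed level by level as a subtree of (^{<λ⁺}2, ⊆) with the homogeneity property that for every level α, every t in level T_α, and every s ∈ T of height < α, the sequence s*t (which begins as s and continues as t) is also in T_α. Then T is homogenous: for all s₀, s₁ ∈ T of the same height, the subtrees T^{s₀} := {t : s₀⌢t ∈ T} and T^{s₁} := {t : s₁⌢t ∈ T} are equal. -/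
open Ordinal Set

noncomputable section

/-- `s*t`: the sequence that begins as `s` (up to `δ`) and continues as `t` (up to `α`). -/
def starSeq (s : Ordinal → Bool) (δ : Ordinal) (t : Ordinal → Bool) (α : Ordinal) :
    Ordinal → Bool :=
  fun β => if β < δ then s β else if β < α then t β else false

/-- `s⌢t`: the concatenation of `s` (of length `h`) with `t` (of length `l`). -/
def concatSeq (s : Ordinal → Bool) (h : Ordinal) (t : Ordinal → Bool) (l : Ordinal) :
    Ordinal → Bool :=
  fun β => if β < h then s β else if β < h + l then t (β - h) else false

theorem starSeq_concatSeq (s s' t : Ordinal → Bool) (h l : Ordinal) :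
    starSeq s h (concatSeq s' h t l) (h + l) = concatSeq s h t l := by
  funext β
  by_cases hβh : β < h
  · simp [starSeq, concatSeq, hβh]
  · by_cases hβl : β < h + l <;> simp [starSeq, concatSeq, hβh, hβl]

theorem concatSeq_zero {s : Ordinal → Bool} {h : Ordinal} (hs : ∀ β, h ≤ β → s β = false)
    (t : Ordinal → Bool) : concatSeq s h t 0 = s := by
  funext β
  by_cases hβh : β < h
  · simp [concatSeq, hβh]
  · simp [concatSeq, hβh, hs β (not_lt.1 hβh)]

/-- Replacing the first `h` entries of a node of `T (h + l)` by another node of `T h`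
is exactly the `*`-operation, under which the level is closed. -/
theorem concatSeq_mem_of_concatSeq_mem {T : Ordinal → Set (Ordinal → Bool)} {h l : Ordinal}
    (hstar : ∀ t ∈ T (h + l), ∀ δ < h + l, ∀ s ∈ T δ, starSeq s δ t (h + l) ∈ T (h + l))
    (hl : l ≠ 0) {s₀ s₁ t : Ordinal → Bool} (hs₁ : s₁ ∈ T h)
    (hmem : concatSeq s₀ h t l ∈ T (h + l)) : concatSeq s₁ h t l ∈ T (h + l) := by
  have hlt : h < h + l := lt_add_of_pos_right h (pos_iff_ne_zero.2 hl)
  simpa only [starSeq_concatSeq] using hstar _ hmem h hlt s₁ hs₁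

theorem stmt15_general (lam : Cardinal)
    (T : Ordinal → Set (Ordinal → Bool))
    (hnorm : ∀ α < (Order.succ lam).ord, ∀ t ∈ T α, ∀ β, α ≤ β → t β = false)
    (hstar : ∀ α < (Order.succ lam).ord, ∀ t ∈ T α, ∀ δ < α, ∀ s ∈ T δ,
      starSeq s δ t α ∈ T α) :
    ∀ h < (Order.succ lam).ord, ∀ s₀ ∈ T h, ∀ s₁ ∈ T h,
      ∀ l, h + l < (Order.succ lam).ord → ∀ t : Ordinal → Bool,
        (concatSeq s₀ h t l ∈ T (h + l) ↔ concatSeq s₁ h t l ∈ T (h + l)) := by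
  intro h hh s₀ hs₀ s₁ hs₁ l hl t
  rcases eq_or_ne l 0 with rfl | hl0
  · rw [add_zero, concatSeq_zero (hnorm h hh s₀ hs₀), concatSeq_zero (hnorm h hh s₁ hs₁)]
    exact iff_of_true hs₀ hs₁
  · exact ⟨concatSeq_mem_of_concatSeq_mem (hstar _ hl) hl0 hs₁,
      concatSeq_mem_of_concatSeq_mem (hstar _ hl) hl0 hs₀⟩

theorem stmt15 (lam : Cardinal) (hinf : Cardinal.aleph0 ≤ lam)
    (T : Ordinal → Set (Ordinal → Bool))
    (hnorm : ∀ α < (Order.succ lam).ord, ∀ t ∈ T α, ∀ β, α ≤ β → t β = false)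
    (hstar : ∀ α < (Order.succ lam).ord, ∀ t ∈ T α, ∀ δ < α, ∀ s ∈ T δ,
      starSeq s δ t α ∈ T α) :
    ∀ h < (Order.succ lam).ord, ∀ s₀ ∈ T h, ∀ s₁ ∈ T h,
      ∀ l, h + l < (Order.succ lam).ord → ∀ t : Ordinal → Bool,
        (concatSeq s₀ h t l ∈ T (h + l) ↔ concatSeq s₁ h t l ∈ T (h + l)) :=
  stmt15_general lam T hnorm hstar

end
end

section
/- Let λ be an uncountable cardinal and suppose T_i ⊆ λ⁺ (for i < μ, μ ≤ λ) are sets such that every α ∈ T_i satisfies otp(C_α) = γ_{i+1}, where ⟨γ_i⟩ is strictly increasing, and such that for α ∈ T_i the clubs C'_α ⊆ C_α satisfy: min of the set of order-type indices used by C'_α exceeds γ_i (precisely, C'_α = π_{C_α}''E where min(E) > γ_i). Define S_i := ∪{acc(C*_α) ∪ {α} : α ∈ T_i} where C*_α ⊆ C'_α are coherent clubs. Then for all i < j < μ, S_i ∩ S_j = ∅; moreover, for every limit α < λ⁺, the set {i : (acc(C*_α) ∪ {α}) ∩ S_i ≠ ∅} has at most one element. -/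
open Ordinal Set

noncomputable section

/-- `S_i := ⋃ {acc(C*_α) ∪ {α} : α ∈ T_i}`. -/
def Sunion (Cstar : Ordinal → Set Ordinal) (T : Set Ordinal) : Set Ordinal :=
  ⋃ α ∈ T, (acc (Cstar α) ∪ {α})

/-!
Along a point `z ∈ acc (C α)` the square sequence is coherent, `C z = C α ∩ z`, so
`otp (C z)` is the `C α`-index of `z`. For `α ∈ T i` the points of `acc (C* α)` lie in `C' α`,
whose indices exceed `γ i`, and `otp (C α) = γ (i + 1)`; hence every `z ∈ S_i` has
`otp (C z) ∈ (γ i, γ (i + 1)]`, and these intervals are pairwise disjoint.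
Coherence of `C*` makes each `S_i` closed under `z ↦ acc (C* z) ∪ {z}`, and any two points of
`acc (C* α) ∪ {α}` are related by this map one way or the other, so if that set meets both `S_i`
and `S_j`, then `S_i` and `S_j` share a point.
-/

universe u v

section Enumeration

variable {C D : Set Ordinal.{u}} {i j : Ordinal.{v}} {c : Ordinal.{u}}

theorem nth_eq_sInf_s18 : nth C i = sInf (C \ nth C '' Iio i) := by
  rw [nth, image_eq_range]

theorem otp_eq_sInf : otp.{u, v} C = sInf {i | C ⊆ nth C '' Iio i} := by
  simp only [otp, image_eq_range]

theorem nth_mem_diff (h : (C \ nth C '' Iio i).Nonempty) : nth C i ∈ C \ nth C '' Iio i := by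
  rw [nth_eq_sInf_s18]
  exact csInf_mem h

theorem nth_le_of_mem_diff_s18 (h : c ∈ C \ nth C '' Iio i) : nth C i ≤ c := by
  rw [nth_eq_sInf_s18]
  exact csInf_le' h

theorem nth_lt_nth (hij : i < j) (h : (C \ nth C '' Iio j).Nonempty) : nth C i < nth C j := by
  have hj := nth_mem_diff h
  have hle : nth C i ≤ nth C j :=
    nth_le_of_mem_diff_s18 ⟨hj.1, fun hi => hj.2 (image_mono (Iio_subset_Iio hij.le) hi)⟩
  exact hle.lt_of_ne fun he => hj.2 ⟨i, hij, he⟩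

/-- The enumeration of a subset runs pointwise above that of the superset. -/
theorem nth_mem_diff_of_subset (hCD : C ⊆ D) (h : (C \ nth C '' Iio i).Nonempty) :
    nth C i ∈ D \ nth D '' Iio i := by
  induction i using WellFoundedLT.induction with
  | _ i ih =>
    refine ⟨hCD (nth_mem_diff h).1, ?_⟩
    rintro ⟨j, hj, hDj⟩
    have hCj : (C \ nth C '' Iio j).Nonempty :=
      h.mono (sdiff_subset_sdiff_right (image_mono (Iio_subset_Iio hj.le)))
    have hle : nth D j ≤ nth C j := nth_le_of_mem_diff_s18 (ih j hj hCj)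
    exact (hle.trans_lt (nth_lt_nth hj h)).ne hDj

/-- `otp D = 0` is also the junk value when no `Ordinal.{v}` indexes all of `D`; then a
subset may well have positive order type. -/
theorem otp_mono (hCD : C ⊆ D) (hD : otp.{u, v} D ≠ 0) : otp.{u, v} C ≤ otp.{u, v} D := by
  have hex : {i : Ordinal.{v} | D ⊆ nth D '' Iio i}.Nonempty := by
    rw [otp_eq_sInf] at hD
    exact nonempty_iff_ne_empty.2 fun he => hD (he ▸ Ordinal.sInf_empty)
  have hDotp : D ⊆ nth D '' Iio (otp.{u, v} D) := otp_eq_sInf ▸ csInf_mem hex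
  rw [otp_eq_sInf (C := C)]
  refine csInf_le' (s := {i : Ordinal.{v} | C ⊆ nth C '' Iio i}) fun c hc => ?_
  by_contra hnot
  have hmem := nth_mem_diff_of_subset hCD ⟨c, hc, hnot⟩
  exact hmem.2 (hDotp hmem.1)

end Enumeration

theorem acc_mono {X Y : Set Ordinal} (h : X ⊆ Y) : acc X ⊆ acc Y := fun _ ⟨hx, hcof⟩ =>
  ⟨h hx, fun γ hγ => (hcof γ hγ).imp fun _ ⟨hδ, hlt⟩ => ⟨h hδ, hlt⟩⟩

theorem mem_acc_inter_Iio {X : Set Ordinal} {x w : Ordinal} (hx : x ∈ acc X) (hxw : x < w) :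
    x ∈ acc (X ∩ Iio w) :=
  ⟨⟨hx.1, hxw⟩, fun γ hγ =>
    (hx.2 γ hγ).imp fun _ ⟨hδ, h1, h2⟩ => ⟨⟨hδ, h2.trans hxw⟩, h1, h2⟩⟩

theorem IsSquareSeq.otp_le_of_mem_acc {lam : Cardinal.{u}}
    {C : Ordinal.{u} → Set Ordinal.{u}} (hC : IsSquareSeq lam C) {α z : Ordinal.{u}}
    (hα : α < (Order.succ lam).ord) (hlim : Order.IsSuccLimit α) (hz : z ∈ acc (C α))
    (hne : otp.{u, v} (C α) ≠ 0) :
    otp.{u, v} (C z) ≤ otp.{u, v} (C α) := by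
  rw [(hC α hα hlim).2.2 z hz]
  exact otp_mono inter_subset_left hne

section Sunion

variable {Cstar : Ordinal.{u} → Set Ordinal.{u}} {T : Set Ordinal.{u}}

theorem mem_Sunion {z : Ordinal} :
    z ∈ Sunion Cstar T ↔ ∃ α ∈ T, z ∈ acc (Cstar α) ∪ {α} := by
  simp only [Sunion, mem_iUnion, exists_prop]

theorem otp_mem_Ioc_of_mem_Sunion {lam : Cardinal.{u}}
    {C C' : Ordinal.{u} → Set Ordinal.{u}} {z : Ordinal.{u}} {lo hi : Ordinal.{v}}
    (hC : IsSquareSeq lam C) (hlo : lo < hi)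
    (hT : ∀ α ∈ T, α < (Order.succ lam).ord ∧ Order.IsSuccLimit α ∧
      otp.{u, v} (C α) = hi)
    (hC' : ∀ α ∈ T, ∀ x ∈ C' α, lo < otp.{u, v} (C α ∩ Iio x))
    (hacc : ∀ α ∈ T, acc (Cstar α) ⊆ acc (C' α) ∧ acc (C' α) ⊆ acc (C α))
    (hz : z ∈ Sunion Cstar T) : otp.{u, v} (C z) ∈ Ioc lo hi := by
  obtain ⟨α, hαT, hz⟩ := mem_Sunion.1 hz
  obtain ⟨hα, hlim, hotp⟩ := hT α hαT
  rcases hz with hz | rfl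
  · have hz' : z ∈ acc (C' α) := (hacc α hαT).1 hz
    have hzC : z ∈ acc (C α) := (hacc α hαT).2 hz'
    have hne : otp.{u, v} (C α) ≠ 0 := hotp ▸ hlo.ne_bot
    refine ⟨?_, hotp ▸ hC.otp_le_of_mem_acc hα hlim hzC hne⟩
    rw [(hC α hα hlim).2.2 z hzC]
    exact hC' α hαT z hz'.1
  · exact ⟨hotp ▸ hlo, hotp.le⟩

theorem acc_union_subset_Sunion
    (hcoh : ∀ α β, β ∈ acc (Cstar α) → Cstar β = Cstar α ∩ Iio β)
    {w : Ordinal} (hw : w ∈ Sunion Cstar T) : acc (Cstar w) ∪ {w} ⊆ Sunion Cstar T := by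
  rintro z (hz | rfl)
  · obtain ⟨α, hαT, hwα | hwα⟩ := mem_Sunion.1 hw
    · rw [hcoh α w hwα] at hz
      exact mem_Sunion.2 ⟨α, hαT, Or.inl (acc_mono inter_subset_left hz)⟩
    · rw [mem_singleton_iff.1 hwα] at hz
      exact mem_Sunion.2 ⟨α, hαT, Or.inl hz⟩
  · exact hw

end Sunion

theorem mem_acc_union_or_mem_acc_union {Cstar : Ordinal → Set Ordinal}
    (hcoh : ∀ α β, β ∈ acc (Cstar α) → Cstar β = Cstar α ∩ Iio β) {α x y : Ordinal}
    (hx : x ∈ acc (Cstar α) ∪ {α}) (hy : y ∈ acc (Cstar α) ∪ {α}) :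
    x ∈ acc (Cstar y) ∪ {y} ∨ y ∈ acc (Cstar x) ∪ {x} := by
  rcases hx with hx | rfl
  · rcases hy with hy | rfl
    · rcases lt_trichotomy x y with hxy | rfl | hyx
      · exact Or.inl (Or.inl (hcoh α y hy ▸ mem_acc_inter_Iio hx hxy))
      · exact Or.inl (Or.inr rfl)
      · exact Or.inr (Or.inl (hcoh α x hx ▸ mem_acc_inter_Iio hy hyx))
    · exact Or.inl (Or.inl hx)
  · exact Or.inr hy

theorem StrictMonoOn.eq_of_mem_Ioc_add_one {β : Type*} [Preorder β] {γ : Ordinal → β}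
    {μ i j : Ordinal} {x : β} (hγ : StrictMonoOn γ (Iic μ)) (hi : i < μ) (hj : j < μ)
    (hxi : x ∈ Ioc (γ i) (γ (i + 1))) (hxj : x ∈ Ioc (γ j) (γ (j + 1))) : i = j := by
  have hsep : ∀ {i j}, i < j → j < μ → γ (i + 1) ≤ γ j := fun hij hj =>
    hγ.monotoneOn (mem_Iic.2 ((Order.add_one_le_of_lt hij).trans hj.le)) (mem_Iic.2 hj.le)
      (Order.add_one_le_of_lt hij)
  rcases lt_trichotomy i j with hij | rfl | hji
  · exact absurd (hxj.1.trans_le (hxi.2.trans (hsep hij hj))) (lt_irrefl _)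
  · rfl
  · exact absurd (hxi.1.trans_le (hxj.2.trans (hsep hji hi))) (lt_irrefl _)

theorem stmt18_general (lam : Cardinal)
    (μ : Ordinal)
    (C : Ordinal → Set Ordinal) (hC : IsSquareSeq lam C)
    (γ : Ordinal → Ordinal) (hγ : StrictMonoOn γ (Set.Iic μ))
    (lamf : Ordinal → Cardinal)
    (T : Ordinal → Set Ordinal)
    (hT : ∀ i < μ, ∀ α ∈ T i, α < (Order.succ lam).ord ∧ Order.IsSuccLimit α ∧
      α.cof = lamf i ∧ otp (C α) = γ (i + 1))
    (C' : Ordinal → Set Ordinal)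
    (hC' : ∀ i < μ, ∀ α ∈ T i, C' α ⊆ C α ∧
      ∀ x ∈ C' α, γ i < otp (C α ∩ Set.Iio x))
    (Cstar : Ordinal → Set Ordinal)
    (hacc : ∀ i < μ, ∀ α ∈ T i,
      acc (Cstar α) ⊆ acc (C' α) ∧ acc (C' α) ⊆ acc (C α))
    (hcoh : ∀ α β : Ordinal, β ∈ acc (Cstar α) → Cstar β = Cstar α ∩ Set.Iio β) :
    (∀ i j, i < j → j < μ → Sunion Cstar (T i) ∩ Sunion Cstar (T j) = ∅) ∧
    ∀ α < (Order.succ lam).ord, Order.IsSuccLimit α → ∀ i < μ, ∀ j < μ,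
      ((acc (Cstar α) ∪ {α}) ∩ Sunion Cstar (T i)).Nonempty →
      ((acc (Cstar α) ∪ {α}) ∩ Sunion Cstar (T j)).Nonempty → i = j := by
  have hband : ∀ i < μ, ∀ z ∈ Sunion Cstar (T i), otp (C z) ∈ Ioc (γ i) (γ (i + 1)) :=
    fun i hi z hz => otp_mem_Ioc_of_mem_Sunion hC
      (hγ (mem_Iic.2 hi.le) (mem_Iic.2 (Order.add_one_le_of_lt hi)) (lt_add_one i))
      (fun α hα => have h := hT i hi α hα; ⟨h.1, h.2.1, h.2.2.2⟩)
      (fun α hα => (hC' i hi α hα).2) (hacc i hi) hz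
  have heq : ∀ i < μ, ∀ j < μ, ∀ z ∈ Sunion Cstar (T i), z ∈ Sunion Cstar (T j) →
      i = j :=
    fun i hi j hj z hzi hzj =>
      hγ.eq_of_mem_Ioc_add_one hi hj (hband i hi z hzi) (hband j hj z hzj)
  refine ⟨fun i j hij hj => eq_empty_iff_forall_notMem.2 fun z ⟨hzi, hzj⟩ =>
    hij.ne (heq i (hij.trans hj) j hj z hzi hzj), ?_⟩
  rintro α - - i hi j hj ⟨x, hx, hxi⟩ ⟨y, hy, hyj⟩
  rcases mem_acc_union_or_mem_acc_union hcoh hx hy with hxy | hyx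
  · exact heq i hi j hj x hxi (acc_union_subset_Sunion hcoh hyj hxy)
  · exact heq i hi j hj y (acc_union_subset_Sunion hcoh hxi hyx) hyj

theorem stmt18 (lam : Cardinal) (hunc : Cardinal.aleph0 < lam)
    (μ : Ordinal) (hμ : μ ≤ lam.ord)
    (C : Ordinal → Set Ordinal) (hC : IsSquareSeq lam C)
    (γ : Ordinal → Ordinal) (hγ : StrictMonoOn γ (Set.Iic μ))
    (lamf : Ordinal → Cardinal)
    (hlamf : ∀ i < μ, γ i < (lamf i).ord ∧ (lamf i).ord ≤ γ (i + 1))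
    (T : Ordinal → Set Ordinal)
    (hT : ∀ i < μ, ∀ α ∈ T i, α < (Order.succ lam).ord ∧ Order.IsSuccLimit α ∧
      α.cof = lamf i ∧ otp (C α) = γ (i + 1))
    (C' : Ordinal → Set Ordinal)
    (hC' : ∀ i < μ, ∀ α ∈ T i, C' α ⊆ C α ∧
      ∀ x ∈ C' α, γ i < otp (C α ∩ Set.Iio x))
    (Cstar : Ordinal → Set Ordinal)
    (hCstar : ∀ i < μ, ∀ α ∈ T i, Cstar α ⊆ C' α ∧ IsClubIn (Cstar α) α)
    (hacc : ∀ i < μ, ∀ α ∈ T i,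
      acc (Cstar α) ⊆ acc (C' α) ∧ acc (C' α) ⊆ acc (C α))
    (hcoh : ∀ α β : Ordinal, β ∈ acc (Cstar α) → Cstar β = Cstar α ∩ Set.Iio β) :
    (∀ i j, i < j → j < μ → Sunion Cstar (T i) ∩ Sunion Cstar (T j) = ∅) ∧
    ∀ α < (Order.succ lam).ord, Order.IsSuccLimit α → ∀ i < μ, ∀ j < μ,
      ((acc (Cstar α) ∪ {α}) ∩ Sunion Cstar (T i)).Nonempty →
      ((acc (Cstar α) ∪ {α}) ∩ Sunion Cstar (T j)).Nonempty → i = j :=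
  stmt18_general lam μ C hC γ hγ lamf T hT C' hC' Cstar hacc hcoh
end
end
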